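/- arXiv:0802.3536 — 3 statements merged into one kernel-verified Lean document; each statement's English description precedes it below -/
import Mathlib

section
/- For every orthonormal triple of vectors x, y, z in ℝ⁷, one has |φ(x,y,z)| ≤ 1; that is, the 3-form φ has comass one and is a calibration on ℝ⁷ (with equality φ(x,y,z) = 1 characterising the associative 3-planes). -/
open RealInnerProductSpace

noncomputable section

/-- `ℝ⁷` with the Euclidean inner product. -/
abbrev R7 := EuclideanSpace ℝ (Fin 7)

/-- The standard basis vectors `e₁, …, e₇` of `ℝ⁷` (0-indexed). -/
def stdBasis (i : Fin 7) : R7 := EuclideanSpace.single i 1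

/-- `dx_i ∧ dx_j ∧ dx_k` evaluated on the triple `(x, y, z)` (0-indexed). -/
def dx3 (i j k : Fin 7) (x y z : R7) : ℝ :=
  x i * (y j * z k - y k * z j) - x j * (y i * z k - y k * z i)
    + x k * (y i * z j - y j * z i)

/-- The associative calibration
`φ = dx₁₂₃ + dx₁₄₅ + dx₁₆₇ + dx₂₄₆ − dx₂₅₇ − dx₃₄₇ − dx₃₅₆` (0-indexed here). -/
def phi (x y z : R7) : ℝ :=
  dx3 0 1 2 x y z + dx3 0 3 4 x y z + dx3 0 5 6 x y z + dx3 1 3 5 x y z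
    - dx3 1 4 6 x y z - dx3 2 3 6 x y z - dx3 2 4 5 x y z

/-!
`φ(x, y, z) = ⟪x × y, z⟫` for the seven-dimensional cross product `×` (the multiplication of
imaginary octonions), and `×` satisfies Lagrange's identity
`‖x × y‖² = ‖x‖²‖y‖² - ⟪x, y⟫²` exactly as in dimension three.  Cauchy–Schwarz therefore gives
`|φ(x, y, z)| ≤ ‖x × y‖ ‖z‖ ≤ ‖x‖ ‖y‖ ‖z‖`.
-/

-- The `k`-th component is `φ(x, y, e_k)`.
def cross7 (x y : R7) : R7 :=
  !₂[x 1 * y 2 - x 2 * y 1 + x 3 * y 4 - x 4 * y 3 + x 5 * y 6 - x 6 * y 5,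
    x 2 * y 0 - x 0 * y 2 + x 3 * y 5 - x 5 * y 3 + x 6 * y 4 - x 4 * y 6,
    x 0 * y 1 - x 1 * y 0 + x 5 * y 4 - x 4 * y 5 + x 6 * y 3 - x 3 * y 6,
    x 4 * y 0 - x 0 * y 4 + x 2 * y 6 - x 6 * y 2 + x 5 * y 1 - x 1 * y 5,
    x 0 * y 3 - x 3 * y 0 + x 1 * y 6 - x 6 * y 1 + x 2 * y 5 - x 5 * y 2,
    x 6 * y 0 - x 0 * y 6 + x 1 * y 3 - x 3 * y 1 + x 4 * y 2 - x 2 * y 4,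
    x 0 * y 5 - x 5 * y 0 + x 3 * y 2 - x 2 * y 3 + x 4 * y 1 - x 1 * y 4]

theorem phi_eq_inner_cross7 (x y z : R7) : phi x y z = ⟪cross7 x y, z⟫ := by
  simp only [phi, dx3, cross7, PiLp.inner_apply, Fin.sum_univ_seven, Matrix.cons_val_zero,
    Matrix.cons_val_one, Matrix.cons_val, RCLike.inner_apply, Real.ringHom_apply]
  ring

theorem norm_cross7_sq (x y : R7) : ‖cross7 x y‖ ^ 2 = ‖x‖ ^ 2 * ‖y‖ ^ 2 - ⟪x, y⟫ ^ 2 := by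
  simp only [EuclideanSpace.real_norm_sq_eq, PiLp.inner_apply, Fin.sum_univ_seven, cross7,
    Matrix.cons_val_zero, Matrix.cons_val_one, Matrix.cons_val, RCLike.inner_apply,
    Real.ringHom_apply]
  ring

theorem norm_cross7_le (x y : R7) : ‖cross7 x y‖ ≤ ‖x‖ * ‖y‖ := by
  have h : ‖cross7 x y‖ ^ 2 ≤ (‖x‖ * ‖y‖) ^ 2 := by
    rw [norm_cross7_sq, mul_pow]
    exact sub_le_self _ (sq_nonneg _)
  exact (pow_le_pow_iff_left₀ (norm_nonneg _) (by positivity) two_ne_zero).1 h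

theorem abs_phi_le (x y z : R7) : |phi x y z| ≤ ‖x‖ * ‖y‖ * ‖z‖ := by
  rw [phi_eq_inner_cross7]
  calc |⟪cross7 x y, z⟫| ≤ ‖cross7 x y‖ * ‖z‖ := abs_real_inner_le_norm _ _
    _ ≤ ‖x‖ * ‖y‖ * ‖z‖ := by gcongr; exact norm_cross7_le x y

theorem phi_comass_one_general (x y z : R7)
    (hx : ‖x‖ = 1) (hy : ‖y‖ = 1) (hz : ‖z‖ = 1) :
    |phi x y z| ≤ 1 := by
  simpa [hx, hy, hz] using abs_phi_le x y z

/-- For every orthonormal triple `x, y, z` in `ℝ⁷`, `|φ(x,y,z)| ≤ 1`: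
the 3-form `φ` has comass one and is a calibration on `ℝ⁷`. -/
theorem phi_comass_one (x y z : R7)
    (hx : ‖x‖ = 1) (hy : ‖y‖ = 1) (hz : ‖z‖ = 1)
    (hxy : ⟪x, y⟫ = 0) (hxz : ⟪x, z⟫ = 0) (hyz : ⟪y, z⟫ = 0) :
    |phi x y z| ≤ 1 :=
  phi_comass_one_general x y z hx hy hz
end
end

section
/- For every unit vector x ∈ ℝ⁷ and every u ∈ x^⊥, one has ‖x × u‖ = ‖u‖ and x × u ∈ x^⊥; hence the 2-form ω_x(u,v) = ⟨x × u, v⟩ on x^⊥ = T_xS⁶ is antisymmetric and nondegenerate, with ω_x(u, x × u) = ‖u‖² for all u ∈ x^⊥. -/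
/-!
Two facts about `φ` carry everything. It is alternating, so `⟪x × u, v⟫ = φ(x, u, v)` vanishes
for `v = x` and changes sign when `u` and `v` are swapped. And the cross product satisfies the
Lagrange identity `‖x × u‖² = ‖x‖²‖u‖² - ⟪x, u⟫²`, a polynomial identity checked in coordinates,
which gives `‖x × u‖ = ‖u‖` on `x^⊥`. Nondegeneracy follows by testing `ω_x(u, ·)` against
`v = x × u`.
-/

open RealInnerProductSpace

noncomputable section

/-- The cross product on `ℝ⁷`: the unique vector with `⟪x × y, z⟫ = φ(x,y,z)` for all `z`. -/
def cross (x y : R7) : R7 := ∑ i, phi x y (stdBasis i) • stdBasis i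

lemma stdBasis_apply (i j : Fin 7) : stdBasis i j = if j = i then 1 else 0 :=
  PiLp.single_apply 2 ℝ i 1 j

lemma cross_apply_eq_phi (x y : R7) (k : Fin 7) : cross x y k = phi x y (stdBasis k) := by
  simp [cross, stdBasis_apply]

lemma inner_cross (x y z : R7) : ⟪cross x y, z⟫ = phi x y z := by
  simp only [PiLp.inner_apply, RCLike.inner_apply, conj_trivial, Fin.sum_univ_seven,
    cross_apply_eq_phi, phi, dx3, stdBasis_apply, Fin.reduceEq, if_true, if_false]
  ring

lemma phi_swap_right (x y z : R7) : phi x z y = -phi x y z := by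
  simp only [phi, dx3]
  ring

lemma phi_self_third (x y : R7) : phi x y x = 0 := by
  simp only [phi, dx3]
  ring

lemma inner_self_cross (x y : R7) : ⟪x, cross x y⟫ = 0 := by
  rw [real_inner_comm, inner_cross, phi_self_third]

lemma inner_cross_swap (x u v : R7) : ⟪cross x u, v⟫ = -⟪cross x v, u⟫ := by
  rw [inner_cross, inner_cross, phi_swap_right]

lemma norm_cross_sq (x y : R7) : ‖cross x y‖ ^ 2 = ‖x‖ ^ 2 * ‖y‖ ^ 2 - ⟪x, y⟫ ^ 2 := by
  simp only [← real_inner_self_eq_norm_sq, PiLp.inner_apply, RCLike.inner_apply, conj_trivial,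
    Fin.sum_univ_seven, cross_apply_eq_phi, phi, dx3, stdBasis_apply, Fin.reduceEq, if_true,
    if_false]
  ring

lemma norm_cross_of_inner_eq_zero {x y : R7} (h : ⟪x, y⟫ = 0) :
    ‖cross x y‖ = ‖x‖ * ‖y‖ := by
  have hsq : ‖cross x y‖ ^ 2 = (‖x‖ * ‖y‖) ^ 2 := by rw [norm_cross_sq, h]; ring
  exact (pow_left_inj₀ (norm_nonneg _) (by positivity) two_ne_zero).mp hsq

lemma eq_zero_of_forall_inner_cross_eq_zero {x u : R7} (hx : x ≠ 0) (hu : ⟪x, u⟫ = 0)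
    (h : ∀ v : R7, ⟪x, v⟫ = 0 → ⟪cross x u, v⟫ = 0) : u = 0 := by
  have hcross : cross x u = 0 := inner_self_eq_zero.mp (h _ (inner_self_cross x u))
  have hnorm : ‖x‖ * ‖u‖ = 0 := by rw [← norm_cross_of_inner_eq_zero hu, hcross, norm_zero]
  simpa [hx] using hnorm

/-- For a unit vector `x ∈ ℝ⁷` and `u ∈ x^⊥`, `‖x × u‖ = ‖u‖` and
`x × u ∈ x^⊥`; hence `ω_x(u,v) = ⟨x × u, v⟩` on `x^⊥ = T_xS⁶` is antisymmetric and
nondegenerate, with `ω_x(u, x × u) = ‖u‖²` for all `u ∈ x^⊥`. -/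
theorem omega_on_sphere (x : R7) (hx : ‖x‖ = 1) :
    (∀ u : R7, ⟪x, u⟫ = 0 → ‖cross x u‖ = ‖u‖ ∧ ⟪x, cross x u⟫ = 0) ∧
    (∀ u v : R7, ⟪x, u⟫ = 0 → ⟪x, v⟫ = 0 →
      ⟪cross x u, v⟫ = -⟪cross x v, u⟫) ∧
    (∀ u : R7, ⟪x, u⟫ = 0 →
      (∀ v : R7, ⟪x, v⟫ = 0 → ⟪cross x u, v⟫ = 0) → u = 0) ∧
    (∀ u : R7, ⟪x, u⟫ = 0 → ⟪cross x u, cross x u⟫ = ‖u‖ ^ 2) := by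
  have hx0 : x ≠ 0 := norm_ne_zero_iff.mp (by rw [hx]; exact one_ne_zero)
  refine ⟨fun u hu => ⟨?_, inner_self_cross x u⟩, fun u v _ _ => inner_cross_swap x u v,
    fun u hu h => eq_zero_of_forall_inner_cross_eq_zero hx0 hu h, fun u hu => ?_⟩
  · rw [norm_cross_of_inner_eq_zero hu, hx, one_mul]
  · rw [real_inner_self_eq_norm_sq, norm_cross_of_inner_eq_zero hu, hx, one_mul]
end
end

section
/- Let H be a real inner product space, let D : H → H be a symmetric linear map (⟨Dv, w⟩ = ⟨v, Dw⟩ for all v, w ∈ H), and let J : H → H be a linear isometry (⟨Jv, Jw⟩ = ⟨v, w⟩ for all v, w) satisfying J ∘ J = −id and D ∘ J = −J ∘ D. Let κ ∈ ℝ, let m > 0 be a real number, and suppose a, b ∈ H satisfy D a = −κ·(J a) and m·(J a) + D b + κ·(J b) = 0. Then a = 0. -/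
/-!
Applying `J` turns the two equations into `K a = 0` and `m • a = K b` for `K = J ∘ (D + κ J)`.
Since `J` is orthogonal with `J² = -1`, it is skew-adjoint, and as it anticommutes with the
symmetric operator `D`, the operator `K` is symmetric. Hence `ker K ⟂ range K`, and `a`, lying in
both, vanishes.
-/

open RealInnerProductSpace LinearMap

section

variable {H : Type*} [NormedAddCommGroup H] [InnerProductSpace ℝ H]

theorem inner_apply_left_eq_neg_inner_apply_right {J : H →ₗ[ℝ] H}
    (hJiso : ∀ v w : H, ⟪J v, J w⟫ = ⟪v, w⟫) (hJJ : ∀ v : H, J (J v) = -v) (v w : H) :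
    ⟪J v, w⟫ = -⟪v, J w⟫ := by
  calc ⟪J v, w⟫ = -⟪J v, J (J w)⟫ := by rw [hJJ, inner_neg_right, neg_neg]
    _ = -⟪v, J w⟫ := by rw [hJiso]

theorem LinearMap.IsSymmetric.comp_of_anticommute {D J : H →ₗ[ℝ] H} (hD : D.IsSymmetric)
    (hJskew : ∀ v w : H, ⟪J v, w⟫ = -⟪v, J w⟫) (hDJ : ∀ v : H, D (J v) = -J (D v)) :
    (J ∘ₗ D).IsSymmetric := fun v w => by
  calc ⟪J (D v), w⟫ = -⟪v, D (J w)⟫ := by rw [hJskew, hD]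
    _ = ⟪v, J (D w)⟫ := by rw [hDJ, inner_neg_right, neg_neg]

theorem LinearMap.IsSymmetric.comp_add_smul_of_anticommute {D J : H →ₗ[ℝ] H}
    (hD : D.IsSymmetric) (hJiso : ∀ v w : H, ⟪J v, J w⟫ = ⟪v, w⟫)
    (hJJ : ∀ v : H, J (J v) = -v) (hDJ : ∀ v : H, D (J v) = -J (D v)) (κ : ℝ) :
    (J ∘ₗ (D + κ • J)).IsSymmetric := by
  have hJJ' : J ∘ₗ J = (-1 : ℝ) • LinearMap.id := LinearMap.ext fun v => by simp [hJJ]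
  rw [comp_add, comp_smul, hJJ']
  exact (hD.comp_of_anticommute (inner_apply_left_eq_neg_inner_apply_right hJiso hJJ) hDJ).add
    ((IsSymmetric.id.smul (star_trivial _)).smul (star_trivial κ))

theorem LinearMap.IsSymmetric.eq_zero_of_mem_ker_of_mem_range {K : H →ₗ[ℝ] H}
    (hK : K.IsSymmetric) {a : H} (hker : a ∈ ker K) (hrange : a ∈ range K) : a = 0 := by
  rw [← hK.orthogonal_range] at hker
  exact (Submodule.mem_bot ℝ).mp
    ((range K).inf_orthogonal_eq_bot ▸ Submodule.mem_inf.mpr ⟨hrange, hker⟩)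

end

/-- key computation in the proof that cone solutions have no `log`
terms.  Let `H` be a real inner product space, `D : H → H` a symmetric linear map,
`J : H → H` a linear isometry with `J ∘ J = −id` and `D ∘ J = −J ∘ D`.  If `κ ∈ ℝ`,
`m > 0`, and `a, b ∈ H` satisfy `D a = −κ·(J a)` and `m·(J a) + D b + κ·(J b) = 0`,
then `a = 0`. -/
theorem no_log_terms {H : Type*} [NormedAddCommGroup H] [InnerProductSpace ℝ H]
    (D J : H →ₗ[ℝ] H)
    (hDsymm : ∀ v w : H, ⟪D v, w⟫ = ⟪v, D w⟫)
    (hJiso : ∀ v w : H, ⟪J v, J w⟫ = ⟪v, w⟫)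
    (hJJ : ∀ v : H, J (J v) = -v)
    (hDJ : ∀ v : H, D (J v) = -J (D v))
    (κ m : ℝ) (hm : 0 < m) (a b : H)
    (ha : D a = -κ • J a)
    (hb : m • J a + D b + κ • J b = 0) :
    a = 0 := by
  set K := J ∘ₗ (D + κ • J)
  have hK : K.IsSymmetric := IsSymmetric.comp_add_smul_of_anticommute hDsymm hJiso hJJ hDJ κ
  have hker : a ∈ ker K := by simp [K, ha]
  have hKb : K b = m • a := by
    have hJb := congrArg J hb
    simp only [map_add, map_smul, hJJ, map_zero] at hJb
    simp only [K, comp_apply, LinearMap.add_apply, LinearMap.smul_apply, map_add, map_smul, hJJ]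
    linear_combination (norm := module) hJb
  have hrange : a ∈ range K := ⟨m⁻¹ • b, by rw [map_smul, hKb, inv_smul_smul₀ hm.ne']⟩
  exact hK.eq_zero_of_mem_ker_of_mem_range hker hrange
end
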